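/- Fix n ≥ k ≥ 2, r > 0 and a probability vector ρ = (p_1, p_2, …). Let Ŷ be a flag simplicial complex on the vertex set V = {1,…,k} and let Y ⊆ Ŷ be a subcomplex containing every vertex of V. Suppose the event E that the subcomplex of R(n,r) spanned by {X_1,…,X_k} equals Ŷ (under the identification j ↦ X_j) has positive probability. Then the conditional probability, given E, that the subcomplex of R(n,r,ρ) spanned by {X_1,…,X_k} equals Y is exactly ∏_{i=1}^{k−1} p_i^{f_i(Y)} · (1 − p_i)^{e_i(Ŷ,Y)}, where f_i(Y) is the number of i-dimensional faces of Y and e_i(Ŷ,Y) is the number of i-dimensional faces σ of Ŷ that are not faces of Y but all of whose proper subsets with at least 2 elements are faces of Y. -/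

import Mathlib

open MeasureTheory Filter Metric Asymptotics ProbabilityTheory
open scoped Classical ENNReal

noncomputable section

/-- Euclidean space `ℝ^d`. -/
abbrev Euc (d : ℕ) : Type := EuclideanSpace ℝ (Fin d)

/-- The law of a single point with probability density `f`. -/
def densMeasure (d : ℕ) (f : Euc d → ℝ) : Measure (Euc d) :=
  volume.withDensity fun x => ENNReal.ofReal (f x)

/-- The joint law of `n` i.i.d. points with density `f`. -/
def ptsMeasure (d : ℕ) (f : Euc d → ℝ) (n : ℕ) : Measure (Fin n → Euc d) :=
  Measure.pi fun _ => densMeasure d f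

/-- Čech face predicate at scale `r`: the closed balls of radius `r/2` around
the points indexed by `s` have a common point. -/
def cechFace {d : ℕ} {ι : Type} (p : ι → Euc d) (r : ℝ) (s : Finset ι) : Prop :=
  ∃ z : Euc d, ∀ i ∈ s, dist z (p i) ≤ r / 2

/-- Vietoris–Rips face predicate at scale `r`: the points indexed by `s` are
pairwise at distance at most `r`. -/
def ripsFace {d : ℕ} {ι : Type} (p : ι → Euc d) (r : ℝ) (s : Finset ι) : Prop :=
  ∀ i ∈ s, ∀ j ∈ s, dist (p i) (p j) ≤ r

/-- Faces of the soft random complex obtained from the (downward closed) face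
predicate `C` and the retention coins `u` : a set `σ` is a face iff it is a face
of `C` and every subset of `σ` with at least two elements has been retained. -/
def softFace {ι : Type} (C : Finset ι → Prop) (u : Finset ι → Bool) (σ : Finset ι) : Prop :=
  C σ ∧ ∀ τ ⊆ σ, 2 ≤ τ.card → u τ = true

/-- Bernoulli measure on `Bool` with success probability `p`. -/
def bern (p : ℝ) : Measure Bool :=
  ENNReal.ofReal p • Measure.dirac true + ENNReal.ofReal (1 - p) • Measure.dirac false

/-- Joint law of the `n` points and of the independent retention coins `U_σ`,
where `P (U_σ = 1) = ρ (|σ| - 1)`. -/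
def softMeasure (d : ℕ) (f : Euc d → ℝ) (n : ℕ) (ρ : ℕ → ℝ) :
    Measure ((Fin n → Euc d) × (Finset (Fin n) → Bool)) :=
  (ptsMeasure d f n).prod (Measure.pi fun σ : Finset (Fin n) => bern (ρ (σ.card - 1)))

/-- The subcomplex of the complex `C` spanned by the vertex set `S` is
isomorphic to the abstract complex `Xf` on `Fin k`. -/
def spannedIso {k n : ℕ} (Xf : Finset (Fin k) → Prop)
    (C : Finset (Fin n) → Prop) (S : Finset (Fin n)) : Prop :=
  ∃ g : Fin k ↪ Fin n, Finset.univ.map g = S ∧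
    ∀ s : Finset (Fin k), Xf s ↔ C (s.map g)

/-- `S` is a union of connected components of the complex `C` : no face of `C`
meets both `S` and its complement. -/
def isComponent {n : ℕ} (C : Finset (Fin n) → Prop) (S : Finset (Fin n)) : Prop :=
  ∀ t : Finset (Fin n), C t → (∃ i ∈ t, i ∈ S) → (∃ j ∈ t, j ∉ S) → False

/-- Number of vertex subsets whose spanned subcomplex in `C` is isomorphic to `Xf`. -/
def countIso {k n : ℕ} (Xf : Finset (Fin k) → Prop) (C : Finset (Fin n) → Prop) : ℕ :=
  Set.ncard {S : Finset (Fin n) | spannedIso Xf C S}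

/-- Number of connected components of `C` isomorphic to `Xf`. -/
def countCompIso {k n : ℕ} (Xf : Finset (Fin k) → Prop) (C : Finset (Fin n) → Prop) : ℕ :=
  Set.ncard {S : Finset (Fin n) | spannedIso Xf C S ∧ isComponent C S}

/-- `fcount Xf i` is the number of `i`-dimensional faces of `Xf`. -/
def fcount {k : ℕ} (Xf : Finset (Fin k) → Prop) (i : ℕ) : ℕ :=
  Set.ncard {s : Finset (Fin k) | Xf s ∧ s.card = i + 1}

/-- `ecount Yhat Yf i` is the number of `i`-dimensional faces of `Yhat` which are not
faces of `Yf` but all of whose proper subsets with at least two elements are faces of `Yf`. -/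
def ecount {k : ℕ} (Yhat Yf : Finset (Fin k) → Prop) (i : ℕ) : ℕ :=
  Set.ncard {s : Finset (Fin k) | Yhat s ∧ ¬ Yf s ∧ s.card = i + 1 ∧
    ∀ t ⊂ s, 2 ≤ t.card → Yf t}

/-- The 1-skeleton graph of a simplicial complex. -/
def oneSkeleton {k : ℕ} (Xf : Finset (Fin k) → Prop) : SimpleGraph (Fin k) where
  Adj i j := i ≠ j ∧ Xf {i, j}
  symm := ⟨fun i j h => ⟨h.1.symm, by rw [Finset.pair_comm]; exact h.2⟩⟩
  loopless := ⟨fun i h => h.1 rfl⟩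

/-- Prepend the origin to a tuple of `k - 1` points, obtaining `k` points. -/
def extend0 {d k : ℕ} (y : Fin (k - 1) → Euc d) : Fin k → Euc d :=
  fun i => if h : (i : ℕ) = 0 then 0 else y ⟨(i : ℕ) - 1, by have := i.isLt; omega⟩

/-- Indicator that the Čech complex at scale `1` on the points `q` is isomorphic to `Xf`. -/
def hIndC {d k : ℕ} (Xf : Finset (Fin k) → Prop) (q : Fin k → Euc d) : ℝ :=
  if ∃ e : Fin k ≃ Fin k, ∀ s : Finset (Fin k), Xf s ↔ cechFace q 1 (s.map e.toEmbedding)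
  then 1 else 0

/-- Indicator that the geometric graph at scale `1` on the points `q` is isomorphic to `Γ`. -/
def hIndG {d k : ℕ} (Γ : SimpleGraph (Fin k)) (q : Fin k → Euc d) : ℝ :=
  if ∃ e : Fin k ≃ Fin k, ∀ i j : Fin k, i ≠ j → (Γ.Adj i j ↔ dist (q (e i)) (q (e j)) ≤ 1)
  then 1 else 0

/-- Strict lexicographic order on `ℝ^d`. -/
def lexLt {d : ℕ} (x y : Euc d) : Prop :=
  ∃ j : Fin d, x j < y j ∧ ∀ l : Fin d, l < j → x l = y l

/-- The lexicographically smallest point among `{p i : i ∈ S}` lies in `A`. -/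
def lmpIn {d n : ℕ} (p : Fin n → Euc d) (S : Finset (Fin n)) (A : Set (Euc d)) : Prop :=
  ∃ i₀ ∈ S, p i₀ ∈ A ∧ ∀ j ∈ S, ¬ lexLt (p j) (p i₀)

/-- `S` induces a subgraph of the geometric graph on `p` at scale `r` isomorphic to `Γ`. -/
def grIsoOn {d n k : ℕ} (Γ : SimpleGraph (Fin k)) (p : Fin n → Euc d) (r : ℝ)
    (S : Finset (Fin n)) : Prop :=
  ∃ g : Fin k ↪ Fin n, Finset.univ.map g = S ∧
    ∀ i j : Fin k, i ≠ j → (Γ.Adj i j ↔ dist (p (g i)) (p (g j)) ≤ r)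

/-- No edge of the geometric graph joins `S` to its complement. -/
def grIsolated {d n : ℕ} (p : Fin n → Euc d) (r : ℝ) (S : Finset (Fin n)) : Prop :=
  ∀ a ∈ S, ∀ b ∉ S, ¬ dist (p a) (p b) ≤ r

/-- The geometric graph on the points `x` at scale `r`. -/
def geomGraph {d k : ℕ} (x : Fin k → Euc d) (r : ℝ) : SimpleGraph (Fin k) where
  Adj i j := i ≠ j ∧ dist (x i) (x j) ≤ r
  symm := ⟨fun i j h => ⟨h.1.symm, by rw [dist_comm]; exact h.2⟩⟩
  loopless := ⟨fun i h => h.1 rfl⟩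

/-- The uniform probability measure on `K`. -/
def unifOn (d : ℕ) (K : Set (Euc d)) : Measure (Euc d) :=
  (volume K)⁻¹ • volume.restrict K

/-- The graph with vertex set `Fin n` and adjacency relation `E` has a connected
component isomorphic to `H`. -/
def hasCompIso {n m : ℕ} (H : SimpleGraph (Fin m)) (E : Fin n → Fin n → Prop) : Prop :=
  ∃ g : Fin m ↪ Fin n,
    (∀ i j : Fin m, i ≠ j → (H.Adj i j ↔ E (g i) (g j))) ∧
    (∀ a b : Fin n, (∃ i, g i = a) → (∀ i, g i ≠ b) → ¬ E a b)

/-- The boundary of the `(k+1)`-dimensional simplex : the complex on `k+2`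
vertices whose faces are all proper subsets. -/
def bdrySimplex (k : ℕ) : Finset (Fin (k + 2)) → Prop :=
  fun s => s ≠ Finset.univ

/-!
STATEMENT 16: For `n ≥ k ≥ 2`, `r > 0`, a probability vector `ρ`, a flag complex `Ŷ` on
`{1,…,k}` and a subcomplex `Y ⊆ Ŷ` containing every vertex: conditionally on the event
that the subcomplex of `R(n,r)` spanned by `{X_1,…,X_k}` equals `Ŷ`, the probability that
the subcomplex of `R(n,r,ρ)` spanned by `{X_1,…,X_k}` equals `Y` is exactly
`∏_{i=1}^{k-1} ρᵢ^{fᵢ(Y)} (1-ρᵢ)^{eᵢ(Ŷ,Y)}`.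
-/

lemma bern_true (p : ℝ) : bern p {true} = ENNReal.ofReal p := by
  simp [bern, Measure.dirac_apply' _ (by trivial : MeasurableSet ({true} : Set Bool))]

lemma bern_false (p : ℝ) : bern p {false} = ENNReal.ofReal (1 - p) := by
  simp [bern, Measure.dirac_apply' _ (by trivial : MeasurableSet ({false} : Set Bool))]

lemma bern_prob {p : ℝ} (hp : p ∈ Set.Icc (0 : ℝ) 1) : IsProbabilityMeasure (bern p) := by
  constructor
  have h1 : (0 : ℝ) ≤ p := hp.1
  have h2 : (0 : ℝ) ≤ 1 - p := by have := hp.2; linarith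
  simp [bern, ← ENNReal.ofReal_add h1 h2]

lemma soft_core {k : ℕ} (Yhat Yf : Finset (Fin k) → Prop)
    (hYhat_flag : ∀ s : Finset (Fin k), Yhat s ↔ ∀ i ∈ s, ∀ j ∈ s, Yhat {i, j})
    (hY_sub : ∀ s : Finset (Fin k), Yf s → Yhat s)
    (hY_down : ∀ s t : Finset (Fin k), Yf s → t ⊆ s → Yf t)
    (hY_vert : ∀ v : Fin k, Yf {v}) (hY_empty : Yf ∅)
    (u : Finset (Fin k) → Bool) :
    (∀ s, Yf s ↔ (Yhat s ∧ ∀ t ⊆ s, 2 ≤ t.card → u t = true)) ↔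
    ((∀ s, Yf s → 2 ≤ s.card → u s = true) ∧
     (∀ s, Yhat s → ¬ Yf s → (∀ t ⊂ s, 2 ≤ t.card → Yf t) → u s = false)) := by
  have hYhat_down : ∀ s t : Finset (Fin k), Yhat s → t ⊆ s → Yhat t := fun s t hs hts =>
    (hYhat_flag t).2 fun i hi j hj => (hYhat_flag s).1 hs i (hts hi) j (hts hj)
  constructor
  · intro h
    refine ⟨fun s hYf hc => ((h s).1 hYf).2 s Finset.Subset.rfl hc, ?_⟩
    intro s hYh hnYf hmin
    by_contra hu
    have hu' : u s = true := by simpa using hu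
    apply hnYf
    rw [h s]
    refine ⟨hYh, fun t hts hct => ?_⟩
    rcases eq_or_ne t s with rfl | hne
    · exact hu'
    · have hss : t ⊂ s := Finset.ssubset_iff_subset_ne.2 ⟨hts, hne⟩
      exact ((h t).1 (hmin t hss hct)).2 t Finset.Subset.rfl hct
  · rintro ⟨h1, h2⟩
    have claim : ∀ s : Finset (Fin k), Yhat s → (∀ t ⊆ s, 2 ≤ t.card → u t = true) → Yf s := by
      intro s
      induction s using Finset.strongInduction with
      | _ s ih =>
        intro hYh hall
        rcases Nat.lt_or_ge s.card 2 with hc | hc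
        · rcases (by omega : s.card = 0 ∨ s.card = 1) with h0 | h01
          · rw [Finset.card_eq_zero.mp h0]; exact hY_empty
          · obtain ⟨v, rfl⟩ := Finset.card_eq_one.mp h01; exact hY_vert v
        · by_contra hnYf
          by_cases hmin : ∀ t ⊂ s, 2 ≤ t.card → Yf t
          · have hf := h2 s hYh hnYf hmin
            have ht := hall s Finset.Subset.rfl hc
            simp [hf] at ht
          · push_neg at hmin
            obtain ⟨t, hts, hct, hnt⟩ := hmin
            exact hnt (ih t hts (hYhat_down s t hYh hts.subset)
              (fun t' ht' hc' => hall t' (ht'.trans hts.subset) hc'))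
    intro s
    constructor
    · intro hYf
      exact ⟨hY_sub s hYf, fun t hts hct => h1 t (hY_down s t hYf hts) hct⟩
    · rintro ⟨hYh, hall⟩
      exact claim s hYh hall

theorem stmt_16 (d : ℕ) (hd : 1 ≤ d) (f : Euc d → ℝ)
    (hf_meas : Measurable f) (hf_nonneg : ∀ x, 0 ≤ f x)
    (hf_bdd : ∃ M : ℝ, ∀ x, f x ≤ M)
    (hf_prob : IsProbabilityMeasure (densMeasure d f))
    (k n : ℕ) (hk : 2 ≤ k) (hkn : k ≤ n) (r : ℝ) (hr : 0 < r)
    (ρ : ℕ → ℝ) (hρ : ∀ i, ρ i ∈ Set.Icc (0 : ℝ) 1)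
    (Yhat Yf : Finset (Fin k) → Prop)
    (hYhat_flag : ∀ s : Finset (Fin k), Yhat s ↔ ∀ i ∈ s, ∀ j ∈ s, Yhat {i, j})
    (hY_sub : ∀ s : Finset (Fin k), Yf s → Yhat s)
    (hY_down : ∀ s t : Finset (Fin k), Yf s → t ⊆ s → Yf t)
    (hY_vert : ∀ v : Fin k, Yf {v}) (hY_empty : Yf ∅)
    (hE_pos : softMeasure d f n ρ
      {ω : (Fin n → Euc d) × (Finset (Fin n) → Bool) |
        ∀ s : Finset (Fin k),
          Yhat s ↔ ripsFace ω.1 r (s.map (Fin.castLEEmb hkn))} ≠ 0) :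
    (softMeasure d f n ρ)[|{ω : (Fin n → Euc d) × (Finset (Fin n) → Bool) |
        ∀ s : Finset (Fin k),
          Yhat s ↔ ripsFace ω.1 r (s.map (Fin.castLEEmb hkn))}]
      {ω : (Fin n → Euc d) × (Finset (Fin n) → Bool) |
        ∀ s : Finset (Fin k),
          Yf s ↔ softFace (ripsFace ω.1 r) ω.2 (s.map (Fin.castLEEmb hkn))}
    = ENNReal.ofReal (∏ i ∈ Finset.Icc 1 (k - 1),
        ρ i ^ fcount Yf i * (1 - ρ i) ^ ecount Yhat Yf i) := by
  classical
  set em : Fin k ↪ Fin n := Fin.castLEEmb hkn with hem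
  set ν : Finset (Fin n) → Measure Bool := fun σ => bern (ρ (σ.card - 1)) with hν
  set μ1 : Measure (Fin n → Euc d) := ptsMeasure d f n with hμ1
  set μ2 : Measure (Finset (Fin n) → Bool) := Measure.pi ν with hμ2
  have hbp : ∀ σ : Finset (Fin n), IsProbabilityMeasure (ν σ) := fun σ => bern_prob (hρ _)
  haveI : ∀ σ : Finset (Fin n), IsProbabilityMeasure (ν σ) := hbp
  haveI : ∀ σ : Finset (Fin n), SigmaFinite (ν σ) := fun σ => by
    haveI := hbp σ; infer_instance
  haveI : IsProbabilityMeasure μ1 := by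
    rw [hμ1]; unfold ptsMeasure; infer_instance
  haveI : IsProbabilityMeasure μ2 := by
    rw [hμ2]; infer_instance
  have hsoft : softMeasure d f n ρ = μ1.prod μ2 := rfl
  set m : Finset (Fin k) → Finset (Fin n) := fun s => s.map em with hm
  have hm_inj : Function.Injective m := Finset.map_injective em
  set E1 : Set (Fin n → Euc d) :=
    {p | ∀ s : Finset (Fin k), Yhat s ↔ ripsFace p r (s.map em)} with hE1
  set F : Finset (Finset (Fin k)) :=
    Finset.univ.filter (fun s => Yf s ∧ 2 ≤ s.card) with hF
  set G : Finset (Finset (Fin k)) := Finset.univ.filter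
    (fun s => Yhat s ∧ ¬ Yf s ∧ 2 ≤ s.card ∧ ∀ t ⊂ s, 2 ≤ t.card → Yf t) with hG
  have hFG : ∀ σ, σ ∈ F.image m → σ ∈ G.image m → False := by
    intro σ h1 h2
    obtain ⟨s, hs, rfl⟩ := Finset.mem_image.1 h1
    obtain ⟨s', hs', heq⟩ := Finset.mem_image.1 h2
    cases hm_inj heq
    rw [hF, Finset.mem_filter] at hs
    rw [hG, Finset.mem_filter] at hs'
    exact hs'.2.2.1 hs.2.1
  set T : Finset (Fin n) → Set Bool := fun σ =>
    if σ ∈ F.image m then {true} else if σ ∈ G.image m then {false} else Set.univ with hT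
  -- subsets of mapped finsets
  have hsub : ∀ (s : Finset (Fin k)) (u : Finset (Fin n) → Bool),
      (∀ τ ⊆ m s, 2 ≤ τ.card → u τ = true) ↔
      (∀ t ⊆ s, 2 ≤ t.card → u (m t) = true) := by
    intro s u
    constructor
    · intro h t hts hct
      exact h (m t) (Finset.map_subset_map.2 hts) (by simpa [hm] using hct)
    · intro h τ hτ hcτ
      rw [hm] at hτ
      obtain ⟨t, hts, rfl⟩ := Finset.subset_map_iff.1 hτ
      exact h t hts (by simpa using hcτ)
  -- the slice identity
  have hslice : ∀ p ∈ E1, ∀ u : Finset (Fin n) → Bool,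
      ((∀ s : Finset (Fin k), Yf s ↔ softFace (ripsFace p r) u (s.map em)) ↔
        u ∈ Set.univ.pi T) := by
    intro p hp u
    have hp' : ∀ s : Finset (Fin k), Yhat s ↔ ripsFace p r (s.map em) := hp
    have h1 : ∀ s : Finset (Fin k),
        softFace (ripsFace p r) u (s.map em) ↔
          (Yhat s ∧ ∀ t ⊆ s, 2 ≤ t.card → u (m t) = true) := by
      intro s
      unfold softFace
      rw [← hp' s, ← hsub s u, hm]
    have h2 := soft_core Yhat Yf hYhat_flag hY_sub hY_down hY_vert hY_empty (fun t => u (m t))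
    constructor
    · intro h
      have hc : (∀ s, Yf s → 2 ≤ s.card → u (m s) = true) ∧
          (∀ s, Yhat s → ¬ Yf s → (∀ t ⊂ s, 2 ≤ t.card → Yf t) → u (m s) = false) :=
        h2.1 (fun s => (h s).trans (h1 s))
      intro σ _
      simp only [hT]
      split_ifs with hF1 hG1
      · obtain ⟨s, hs, rfl⟩ := Finset.mem_image.1 hF1
        rw [hF, Finset.mem_filter] at hs
        simp [hc.1 s hs.2.1 hs.2.2]
      · obtain ⟨s, hs, rfl⟩ := Finset.mem_image.1 hG1
        rw [hG, Finset.mem_filter] at hs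
        simp [hc.2 s hs.2.1 hs.2.2.1 hs.2.2.2.2]
      · trivial
    · intro h s
      rw [h1 s]
      revert s
      refine h2.2 ⟨?_, ?_⟩
      · intro s hYf hc
        have hmem : m s ∈ F.image m := Finset.mem_image_of_mem m
          (by rw [hF, Finset.mem_filter]; exact ⟨Finset.mem_univ _, hYf, hc⟩)
        have hh := h (m s) (Set.mem_univ _)
        simp only [hT, if_pos hmem] at hh
        simpa using hh
      · intro s hYh hnYf hmin
        have hc2 : 2 ≤ s.card := by
          rcases Nat.lt_or_ge s.card 2 with h' | h'
          · exfalso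
            rcases (by omega : s.card = 0 ∨ s.card = 1) with h0 | h01
            · exact hnYf (by rw [Finset.card_eq_zero.mp h0]; exact hY_empty)
            · obtain ⟨v, rfl⟩ := Finset.card_eq_one.mp h01; exact hnYf (hY_vert v)
          · exact h'
        have hmem : m s ∈ G.image m := Finset.mem_image_of_mem m
          (by rw [hG, Finset.mem_filter]; exact ⟨Finset.mem_univ _, hYh, hnYf, hc2, hmin⟩)
        have hnF : m s ∉ F.image m := by
          intro hmem'
          obtain ⟨s', hs', heq⟩ := Finset.mem_image.1 hmem'
          cases hm_inj heq
          rw [hF, Finset.mem_filter] at hs'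
          exact hnYf hs'.2.1
        have hh := h (m s) (Set.mem_univ _)
        simp only [hT, if_neg hnF, if_pos hmem] at hh
        simpa using hh
  -- E as a product set
  have hEset : {ω : (Fin n → Euc d) × (Finset (Fin n) → Bool) |
      ∀ s : Finset (Fin k), Yhat s ↔ ripsFace ω.1 r (s.map em)} = E1 ×ˢ Set.univ := by
    ext ⟨p, u⟩
    simp [hE1]
  -- E ∩ A as a product set
  have hAE : (E1 ×ˢ (Set.univ : Set (Finset (Fin n) → Bool))) ∩
      {ω : (Fin n → Euc d) × (Finset (Fin n) → Bool) |
        ∀ s : Finset (Fin k), Yf s ↔ softFace (ripsFace ω.1 r) ω.2 (s.map em)} =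
      E1 ×ˢ (Set.univ.pi T) := by
    ext ⟨p, u⟩
    simp only [Set.mem_inter_iff, Set.mem_setOf_eq, Set.mem_prod, Set.mem_univ, and_true,
      true_and]
    constructor
    · rintro ⟨hp, h2'⟩
      exact ⟨hp, (hslice p hp u).1 h2'⟩
    · rintro ⟨hp, hu⟩
      exact ⟨hp, (hslice p hp u).2 hu⟩
  -- measurability
  have hrips_meas : ∀ S : Finset (Fin n), MeasurableSet {p : Fin n → Euc d | ripsFace p r S} := by
    intro S
    have he : {p : Fin n → Euc d | ripsFace p r S} =
        ⋂ i ∈ S, ⋂ j ∈ S, {p : Fin n → Euc d | dist (p i) (p j) ≤ r} := by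
      ext p; simp [ripsFace]
    rw [he]
    refine MeasurableSet.biInter (Set.to_countable _) fun i _ =>
      MeasurableSet.biInter (Set.to_countable _) fun j _ => ?_
    exact measurableSet_le ((measurable_pi_apply i).dist (measurable_pi_apply j))
      measurable_const
  have hE1_meas : MeasurableSet E1 := by
    have he : E1 = ⋂ s : Finset (Fin k), {p | Yhat s ↔ ripsFace p r (s.map em)} := by
      ext p; simp [hE1, Set.mem_iInter]
    rw [he]
    refine MeasurableSet.iInter fun s => ?_
    by_cases hY : Yhat s
    · have he2 : {p : Fin n → Euc d | Yhat s ↔ ripsFace p r (s.map em)} =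
          {p | ripsFace p r (s.map em)} := by ext p; simp [hY]
      rw [he2]; exact hrips_meas _
    · have he2 : {p : Fin n → Euc d | Yhat s ↔ ripsFace p r (s.map em)} =
          {p | ripsFace p r (s.map em)}ᶜ := by ext p; simp [hY]
      rw [he2]; exact (hrips_meas _).compl
  have hE_meas : MeasurableSet (E1 ×ˢ (Set.univ : Set (Finset (Fin n) → Bool))) :=
    hE1_meas.prod MeasurableSet.univ
  -- measure of the coin cylinder
  have hval : ∀ σ : Finset (Fin n), ν σ (T σ) =
      if σ ∈ F.image m then ENNReal.ofReal (ρ (σ.card - 1))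
      else if σ ∈ G.image m then ENNReal.ofReal (1 - ρ (σ.card - 1)) else 1 := by
    intro σ
    simp only [hT, hν]
    split_ifs
    · exact bern_true _
    · exact bern_false _
    · haveI := hbp σ
      exact measure_univ
  have hcardk : ∀ s : Finset (Fin k), s.card ≤ k := by
    intro s
    have := Finset.card_le_univ s
    simpa using this
  have hmapsF : ∀ s ∈ F, s.card - 1 ∈ Finset.Icc 1 (k - 1) := by
    intro s hs
    rw [hF, Finset.mem_filter] at hs
    have := hcardk s
    rw [Finset.mem_Icc]
    omega
  have hmapsG : ∀ s ∈ G, s.card - 1 ∈ Finset.Icc 1 (k - 1) := by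
    intro s hs
    rw [hG, Finset.mem_filter] at hs
    have := hcardk s
    rw [Finset.mem_Icc]
    omega
  have hfib : ∀ i ∈ Finset.Icc 1 (k - 1),
      (F.filter (fun s => s.card - 1 = i)).card = fcount Yf i := by
    intro i hi
    rw [Finset.mem_Icc] at hi
    have hset : {s : Finset (Fin k) | Yf s ∧ s.card = i + 1} =
        ↑(F.filter (fun s => s.card - 1 = i)) := by
      ext s
      simp only [Set.mem_setOf_eq, Finset.coe_filter, hF, Finset.mem_filter, Finset.mem_univ,
        true_and]
      constructor
      · rintro ⟨h1', h2'⟩; exact ⟨⟨h1', by omega⟩, by omega⟩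
      · rintro ⟨⟨h1', h2'⟩, h3'⟩; exact ⟨h1', by omega⟩
    rw [fcount, hset, Set.ncard_coe_finset]
  have hfibG : ∀ i ∈ Finset.Icc 1 (k - 1),
      (G.filter (fun s => s.card - 1 = i)).card = ecount Yhat Yf i := by
    intro i hi
    rw [Finset.mem_Icc] at hi
    have hset : {s : Finset (Fin k) | Yhat s ∧ ¬ Yf s ∧ s.card = i + 1 ∧
        ∀ t ⊂ s, 2 ≤ t.card → Yf t} = ↑(G.filter (fun s => s.card - 1 = i)) := by
      ext s
      simp only [Set.mem_setOf_eq, Finset.coe_filter, hG, Finset.mem_filter, Finset.mem_univ,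
        true_and]
      constructor
      · rintro ⟨h1', h2', h3', h4'⟩; exact ⟨⟨h1', h2', by omega, h4'⟩, by omega⟩
      · rintro ⟨⟨h1', h2', h3', h4'⟩, h5'⟩; exact ⟨h1', h2', by omega, h4'⟩
    rw [ecount, hset, Set.ncard_coe_finset]
  have hμB : μ2 (Set.univ.pi T) = ENNReal.ofReal (∏ i ∈ Finset.Icc 1 (k - 1),
      ρ i ^ fcount Yf i * (1 - ρ i) ^ ecount Yhat Yf i) := by
    rw [hμ2, Measure.pi_pi]
    rw [Finset.prod_congr rfl (fun σ _ => hval σ)]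
    rw [← Finset.prod_subset (Finset.subset_univ (F.image m ∪ G.image m))
      (by
        intro σ _ hσ
        rw [Finset.mem_union] at hσ
        push_neg at hσ
        rw [if_neg hσ.1, if_neg hσ.2])]
    rw [Finset.prod_union (Finset.disjoint_left.2 (fun {σ} h1' h2' => (hFG σ h1' h2').elim))]
    have e1 : ∏ σ ∈ F.image m, (if σ ∈ F.image m then ENNReal.ofReal (ρ (σ.card - 1))
        else if σ ∈ G.image m then ENNReal.ofReal (1 - ρ (σ.card - 1)) else 1) =
        ∏ s ∈ F, ENNReal.ofReal (ρ (s.card - 1)) := by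
      rw [Finset.prod_image (fun s _ s' _ h => hm_inj h)]
      refine Finset.prod_congr rfl fun s hs => ?_
      rw [if_pos (Finset.mem_image_of_mem m hs)]
      simp [hm]
    have e2 : ∏ σ ∈ G.image m, (if σ ∈ F.image m then ENNReal.ofReal (ρ (σ.card - 1))
        else if σ ∈ G.image m then ENNReal.ofReal (1 - ρ (σ.card - 1)) else 1) =
        ∏ s ∈ G, ENNReal.ofReal (1 - ρ (s.card - 1)) := by
      rw [Finset.prod_image (fun s _ s' _ h => hm_inj h)]
      refine Finset.prod_congr rfl fun s hs => ?_
      rw [if_neg (fun h => hFG (m s) h (Finset.mem_image_of_mem m hs)),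
        if_pos (Finset.mem_image_of_mem m hs)]
      simp [hm]
    rw [e1, e2]
    have e3 : ∏ s ∈ F, ENNReal.ofReal (ρ (s.card - 1)) =
        ∏ i ∈ Finset.Icc 1 (k - 1), ENNReal.ofReal (ρ i) ^ fcount Yf i := by
      rw [← Finset.prod_fiberwise_of_maps_to hmapsF (fun s => ENNReal.ofReal (ρ (s.card - 1)))]
      refine Finset.prod_congr rfl fun i hi => ?_
      have hcc : ∀ s ∈ F.filter (fun s => s.card - 1 = i),
          ENNReal.ofReal (ρ (s.card - 1)) = ENNReal.ofReal (ρ i) := fun s hs => by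
        rw [(Finset.mem_filter.1 hs).2]
      rw [Finset.prod_congr rfl hcc, Finset.prod_const, hfib i hi]
    have e4 : ∏ s ∈ G, ENNReal.ofReal (1 - ρ (s.card - 1)) =
        ∏ i ∈ Finset.Icc 1 (k - 1), ENNReal.ofReal (1 - ρ i) ^ ecount Yhat Yf i := by
      rw [← Finset.prod_fiberwise_of_maps_to hmapsG
        (fun s => ENNReal.ofReal (1 - ρ (s.card - 1)))]
      refine Finset.prod_congr rfl fun i hi => ?_
      have hcc : ∀ s ∈ G.filter (fun s => s.card - 1 = i),
          ENNReal.ofReal (1 - ρ (s.card - 1)) = ENNReal.ofReal (1 - ρ i) := fun s hs => by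
        rw [(Finset.mem_filter.1 hs).2]
      rw [Finset.prod_congr rfl hcc, Finset.prod_const, hfibG i hi]
    rw [e3, e4, ← Finset.prod_mul_distrib,
      ENNReal.ofReal_prod_of_nonneg (fun i _ => mul_nonneg
        (pow_nonneg (hρ i).1 _) (pow_nonneg (by have := (hρ i).2; linarith) _))]
    refine Finset.prod_congr rfl fun i _ => ?_
    rw [ENNReal.ofReal_mul (pow_nonneg (hρ i).1 _), ENNReal.ofReal_pow (hρ i).1,
      ENNReal.ofReal_pow (by have := (hρ i).2; linarith)]
  -- assemble
  rw [hsoft, hEset] at hE_pos ⊢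
  rw [cond_apply hE_meas, hAE, Measure.prod_prod, Measure.prod_prod, measure_univ, mul_one,
    ← mul_assoc, ENNReal.inv_mul_cancel ?h0 ?htop, one_mul, hμB]
  case h0 =>
    rw [Measure.prod_prod, measure_univ, mul_one] at hE_pos
    exact hE_pos
  case htop => exact measure_ne_top μ1 E1
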